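/- arXiv:2107.05744 — 6 statements merged into one kernel-verified Lean document; each statement's English description precedes it below -/
import Mathlib

section
/- Let K be a finite field. The set S = {(x, 1−x) : x ∈ K, x ≠ 0, x ≠ 1} is a Sidon set in the group K^× × K^×. -/
/-!
If `ab = cd` in `K^× × K^×` with all four points on the line `x + y = 1`, then comparing first
coordinates gives `a₁b₁ = c₁d₁`, and comparing second coordinates, after substituting
`y = 1 - x`, gives `a₁ + b₁ = c₁ + d₁`. So `{a₁, b₁}` and `{c₁, d₁}` are the root multisets of the
same monic quadratic, hence equal, and a point of the line is determined by its first coordinate.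
-/

theorem eq_and_eq_or_eq_and_eq_of_add_eq_add_of_mul_eq_mul {R : Type*} [CommRing R]
    [NoZeroDivisors R] {a b c d : R} (hadd : a + b = c + d) (hmul : a * b = c * d) :
    a = c ∧ b = d ∨ a = d ∧ b = c := by
  have hquad : (a - c) * (a - d) = 0 := by linear_combination a * hadd - hmul
  rcases mul_eq_zero.mp hquad with h | h
  · exact Or.inl ⟨by linear_combination h, by linear_combination hadd - h⟩
  · exact Or.inr ⟨by linear_combination h, by linear_combination hadd - h⟩

theorem Units.injOn_fst_setOf_add_eq_one {R : Type*} [Ring R] :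
    Set.InjOn (fun p : Rˣ × Rˣ => (p.1 : R)) {p | (p.1 : R) + p.2 = 1} := by
  intro p hp q hq h
  have hsnd : (p.2 : R) = q.2 := by
    rw [← sub_eq_of_eq_add' hp.symm, ← sub_eq_of_eq_add' hq.symm]
    exact congrArg (1 - ·) h
  exact Prod.ext (Units.ext h) (Units.ext hsnd)

theorem hughes_cilleruelo_sidon_general {K : Type*} [Field K] :
    ∀ a ∈ {p : Kˣ × Kˣ | (p.1 : K) + (p.2 : K) = 1},
    ∀ b ∈ {p : Kˣ × Kˣ | (p.1 : K) + (p.2 : K) = 1},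
    ∀ c ∈ {p : Kˣ × Kˣ | (p.1 : K) + (p.2 : K) = 1},
    ∀ d ∈ {p : Kˣ × Kˣ | (p.1 : K) + (p.2 : K) = 1},
      a * b = c * d → ({a, b} : Set (Kˣ × Kˣ)) = {c, d} := by
  rintro a ha b hb c hc d hd h
  have hfst : (a.1 : K) * b.1 = c.1 * d.1 := by simpa using congrArg (fun p => (p.1 : K)) h
  have hsnd : (a.2 : K) * b.2 = c.2 * d.2 := by simpa using congrArg (fun p => (p.2 : K)) h
  have hadd : (a.1 : K) + b.1 = c.1 + d.1 := by
    rw [Set.mem_ofPred_eq] at ha hb hc hd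
    linear_combination hfst - hsnd + (1 - (b.1 : K)) * ha + (a.2 : K) * hb
      - (1 - (d.1 : K)) * hc - (c.2 : K) * hd
  have hinj := Units.injOn_fst_setOf_add_eq_one (R := K)
  rw [Set.pair_eq_pair_iff]
  exact (eq_and_eq_or_eq_and_eq_of_add_eq_add_of_mul_eq_mul hadd hfst).imp
    (And.imp (hinj ha hc) (hinj hb hd)) (And.imp (hinj ha hd) (hinj hb hc))

/-- Hughes–Cilleruelo: `{(x, y) : x + y = 1, x, y ≠ 0}` is a Sidon set in `K^× × K^×`. -/
theorem hughes_cilleruelo_sidon {K : Type*} [Field K] [Fintype K] :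
    ∀ a ∈ {p : Kˣ × Kˣ | (p.1 : K) + (p.2 : K) = 1},
    ∀ b ∈ {p : Kˣ × Kˣ | (p.1 : K) + (p.2 : K) = 1},
    ∀ c ∈ {p : Kˣ × Kˣ | (p.1 : K) + (p.2 : K) = 1},
    ∀ d ∈ {p : Kˣ × Kˣ | (p.1 : K) + (p.2 : K) = 1},
      a * b = c * d → ({a, b} : Set (Kˣ × Kˣ)) = {c, d} :=
  hughes_cilleruelo_sidon_general
end

section
/- Let K ⊆ L be finite fields with [L : K] = 3, and let H = {x ∈ L : tr_{L/K}(x) = 0}. Then the image of H ∩ L^× in the quotient group G = L^×/K^× is a Sidon set. -/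
/-!
Suppose `x y = c z w` with `x, y, z, w` in the trace-zero plane `H`, `c ∈ K`, and `y, z`
independent, so that `H = span {y, z}`. Then `t = x z⁻¹` sends `z ↦ x` and `y ↦ c w`, hence maps
`H` into itself. The elements of `L` stabilizing a proper nonzero `K`-subspace form a proper
`K`-subalgebra, which is `K` since `[L : K] = 3` is prime. So `x ∈ K z`, and cancellation in
`L^×/K^×` does the rest.
-/

open Module Submodule

theorem Set.pair_eq_pair_of_mul_eq_mul {G : Type*} [CommGroup G] {a b c d : G}
    (h : a * b = c * d) (hc : a = c ∨ b = c) : ({a, b} : Set G) = {c, d} := by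
  rcases hc with rfl | rfl
  · rw [mul_left_cancel h]
  · rw [mul_comm] at h
    rw [mul_left_cancel h, Set.pair_comm]

namespace Submodule

variable {K L : Type*} [Field K] [DivisionRing L] [Algebra K L]

def mulStabilizer (V : Submodule K L) : Subalgebra K L where
  carrier := {a | ∀ v ∈ V, a * v ∈ V}
  mul_mem' {a b} ha hb v hv := by rw [mul_assoc]; exact ha _ (hb v hv)
  add_mem' {a b} ha hb v hv := by rw [add_mul]; exact V.add_mem (ha v hv) (hb v hv)
  algebraMap_mem' c v hv := by rw [← Algebra.smul_def]; exact V.smul_mem c hv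

theorem mem_mulStabilizer {V : Submodule K L} {a : L} :
    a ∈ V.mulStabilizer ↔ ∀ v ∈ V, a * v ∈ V := Iff.rfl

theorem mulStabilizer_ne_top {V : Submodule K L} (hV0 : V ≠ ⊥) (hV : V ≠ ⊤) :
    V.mulStabilizer ≠ ⊤ := by
  intro htop
  obtain ⟨v, hv, hv0⟩ := V.ne_bot_iff.mp hV0
  refine hV (eq_top_iff.mpr fun l _ => ?_)
  have := mem_mulStabilizer.mp (htop ▸ Algebra.mem_top : l * v⁻¹ ∈ V.mulStabilizer) v hv
  rwa [inv_mul_cancel_right₀ hv0] at this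

theorem mulStabilizer_eq_bot (hp : (finrank K L).Prime) {V : Submodule K L} (hV0 : V ≠ ⊥)
    (hV : V ≠ ⊤) : V.mulStabilizer = ⊥ :=
  ((Subalgebra.isSimpleOrder_of_finrank_prime K L hp).eq_bot_or_eq_top _).resolve_right
    (mulStabilizer_ne_top hV0 hV)

theorem span_pair_eq_of_finrank_eq_two {V : Submodule K L} (hV : finrank K V = 2) {y z : L}
    (hy : y ∈ V) (hz : z ∈ V) (hz0 : z ≠ 0) (hyz : y ∉ K ∙ z) : span K {y, z} = V := by
  have hlt : K ∙ z < span K {y, z} :=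
    lt_of_le_of_ne (span_mono (by simp)) fun h => hyz (h ▸ subset_span (by simp))
  have : FiniteDimensional K V := .of_finrank_pos (by omega)
  have : FiniteDimensional K (span K {y, z}) := .span_of_finite K (Set.toFinite _)
  refine eq_of_le_of_finrank_le (span_le.mpr ?_) ?_
  · rintro v (rfl | rfl) <;> assumption
  · have := finrank_lt_finrank_of_lt hlt
    rw [finrank_span_singleton hz0] at this
    omega

end Submodule

theorem Algebra.finrank_ker_trace_add_one {K L : Type*} [Field K] [Field L] [Algebra K L]
    [FiniteDimensional K L] [Algebra.IsSeparable K L] :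
    finrank K (LinearMap.ker (Algebra.trace K L)) + 1 = finrank K L := by
  have := LinearMap.finrank_range_add_finrank_ker (Algebra.trace K L)
  rw [LinearMap.range_eq_top.mpr (Algebra.trace_surjective K L), finrank_top,
    finrank_self] at this
  omega

theorem QuotientGroup.mk_eq_mk_iff_mem_span {K L : Type*} [Field K] [DivisionRing L]
    [Algebra K L] {u v : Lˣ} :
    (u : Lˣ ⧸ (Units.map (algebraMap K L : K →* L)).range) = v ↔
      (u : L) ∈ K ∙ (v : L) := by
  rw [eq_comm, QuotientGroup.eq, MonoidHom.mem_range, Submodule.mem_span_singleton]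
  constructor
  · rintro ⟨k, hk⟩
    refine ⟨k, ?_⟩
    have hk' := congrArg Units.val hk
    simp only [Units.coe_map, MonoidHom.coe_coe, Units.val_mul, Units.val_inv_eq_inv_val] at hk'
    rw [Algebra.smul_def, Algebra.commutes, hk', mul_inv_cancel_left₀ v.ne_zero]
  · rintro ⟨c, hc⟩
    have hc0 : c ≠ 0 := by rintro rfl; exact v.ne_zero (by simpa using hc.symm)
    refine ⟨Units.mk0 c hc0, Units.ext ?_⟩
    simp only [Units.coe_map, MonoidHom.coe_coe, Units.val_mul, Units.val_inv_eq_inv_val,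
      Units.val_mk0]
    rw [← hc, Algebra.smul_def, Algebra.commutes, inv_mul_cancel_left₀ v.ne_zero]

theorem Submodule.mem_span_singleton_of_mul_mem_span {K L : Type*} [Field K] [Field L]
    [Algebra K L] (hp : (finrank K L).Prime) {V : Submodule K L} (hV : V ≠ ⊤) {x y z w : L}
    (hyz : span K {y, z} = V) (hx : x ∈ V) (hw : w ∈ V) (hz : z ≠ 0)
    (h : x * y ∈ K ∙ (z * w)) : x ∈ K ∙ z := by
  obtain ⟨c, hc⟩ := mem_span_singleton.mp h
  have hV0 : V ≠ ⊥ := V.ne_bot_iff.mpr ⟨z, hyz ▸ subset_span (by simp), hz⟩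
  have hstab : x * z⁻¹ ∈ V.mulStabilizer := by
    intro v hv
    rw [← hyz] at hv hx hw ⊢
    obtain ⟨a, b, rfl⟩ := mem_span_pair.mp hv
    have hy : x * z⁻¹ * y = c • w := by
      rw [mul_right_comm, ← hc, smul_mul_assoc, mul_comm z, mul_inv_cancel_right₀ hz]
    rw [mul_add, mul_smul_comm, mul_smul_comm, hy, inv_mul_cancel_right₀ hz]
    exact add_mem (smul_mem _ _ (smul_mem _ _ hw)) (smul_mem _ _ hx)
  rw [mulStabilizer_eq_bot hp hV0 hV, Algebra.mem_bot] at hstab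
  obtain ⟨μ, hμ⟩ := hstab
  exact mem_span_singleton.mpr ⟨μ, by rw [Algebra.smul_def, hμ, inv_mul_cancel_right₀ hz]⟩

theorem singer_sidon_general {K L : Type*} [Field K] [Field L] [Fintype L]
    [Algebra K L] (hdim : Module.finrank K L = 3) :
    let KX : Subgroup Lˣ := (Units.map (algebraMap K L : K →* L)).range
    let S : Set (Lˣ ⧸ KX) :=
      QuotientGroup.mk '' {x : Lˣ | Algebra.trace K L (x : L) = 0}
    ∀ a ∈ S, ∀ b ∈ S, ∀ c ∈ S, ∀ d ∈ S,
      a * b = c * d → ({a, b} : Set (Lˣ ⧸ KX)) = {c, d} := by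
  rintro KX S _ ⟨x, hx, rfl⟩ _ ⟨y, hy, rfl⟩ _ ⟨z, hz, rfl⟩ _ ⟨w, hw, rfl⟩ habcd
  have hH : finrank K (LinearMap.ker (Algebra.trace K L)) = 2 := by
    have := (Algebra.finrank_ker_trace_add_one (K := K) (L := L)).trans hdim
    omega
  have hHtop : LinearMap.ker (Algebra.trace K L) ≠ ⊤ := fun h =>
    Algebra.trace_ne_zero K L (LinearMap.ker_eq_top.mp h)
  refine Set.pair_eq_pair_of_mul_eq_mul habcd (or_iff_not_imp_right.mpr fun hyz => ?_)
  rw [← QuotientGroup.mk_mul, ← QuotientGroup.mk_mul, QuotientGroup.mk_eq_mk_iff_mem_span,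
    Units.val_mul, Units.val_mul] at habcd
  rw [QuotientGroup.mk_eq_mk_iff_mem_span] at hyz ⊢
  exact mem_span_singleton_of_mul_mem_span (hdim ▸ Nat.prime_three) hHtop
    (span_pair_eq_of_finrank_eq_two hH hy hz z.ne_zero hyz) hx hw z.ne_zero habcd

/-- Singer: if `[L : K] = 3` and `H` is the trace-zero hyperplane, the image of
`H ∩ L^×` in `L^×/K^×` is a Sidon set. -/
theorem singer_sidon {K L : Type*} [Field K] [Field L] [Fintype K] [Fintype L]
    [Algebra K L] (hdim : Module.finrank K L = 3) :
    let KX : Subgroup Lˣ := (Units.map (algebraMap K L : K →* L)).range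
    let S : Set (Lˣ ⧸ KX) :=
      QuotientGroup.mk '' {x : Lˣ | Algebra.trace K L (x : L) = 0}
    ∀ a ∈ S, ∀ b ∈ S, ∀ c ∈ S, ∀ d ∈ S,
      a * b = c * d → ({a, b} : Set (Lˣ ⧸ KX)) = {c, d} :=
  singer_sidon_general hdim
end

section
/- Let L be an incidence structure that is a partial linear space, and let G be an abelian group of automorphisms of L acting regularly on points and regularly on lines. Then for any point p and any line ℓ, the set S = {g ∈ G : p^g ∈ ℓ} is a Sidon set in G. -/
/-!
A subset `S` of an abelian group is Sidon as soon as no nontrivial translate `g S` meets `S`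
in two elements. For `S = {g | p^g ∈ ℓ}`, two elements of `S ∩ g S` give two distinct points
lying on both `ℓ` and `ℓ^g`; in a partial linear space this forces `ℓ^g = ℓ`, hence `g = 1`
because `G` acts regularly on lines.
-/

section Sidon

variable {G : Type*} [CommGroup G]

theorem pair_eq_pair_of_mul_eq_mul {S : Set G}
    (hS : ∀ g : G, ∀ s ∈ S, ∀ t ∈ S, s ≠ t → g * s ∈ S → g * t ∈ S → g = 1) :
    ∀ x ∈ S, ∀ y ∈ S, ∀ z ∈ S, ∀ w ∈ S, x * y = z * w → ({x, y} : Set G) = {z, w} := by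
  intro x hx y hy z hz w hw hxy
  by_cases hxz : x = z
  · subst hxz
    rw [mul_left_cancel hxy]
  · have hy' : w * x⁻¹ * z = y := by
      rw [mul_right_comm, mul_comm w z, ← hxy, mul_comm x y, mul_inv_cancel_right]
    have hxw : x = w := by
      have h := hS (w * x⁻¹) x hx z hz hxz (by rwa [inv_mul_cancel_right]) (by rwa [hy'])
      exact (mul_inv_eq_one.mp h).symm
    subst hxw
    obtain rfl : y = z := mul_left_cancel (hxy.trans (mul_comm z x))
    exact Set.pair_comm x y

end Sidon

theorem eq_one_of_existsUnique_smul_eq {G α : Type*} [Group G] [MulAction G α]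
    (hreg : ∀ a a' : α, ∃! g : G, g • a = a') {g : G} {a : α} (hg : g • a = a) : g = 1 :=
  (hreg a a).unique hg (one_smul G a)

section PartialLinearSpace

variable {G P L : Type*} [Group G] [MulAction G P] [MulAction G L] {I : P → L → Prop}

variable (G) in
def incidenceSet (I : P → L → Prop) (p : P) (l : L) : Set G := {g : G | I (g • p) l}

theorem eq_one_of_smul_incident_of_incident
    (hpls : ∀ p q : P, p ≠ q → ∀ l m : L, I p l → I q l → I p m → I q m → l = m)
    (hinc : ∀ (g : G) (p : P) (l : L), I p l → I (g • p) (g • l))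
    (hfreeL : ∀ (g : G) (l : L), g • l = l → g = 1)
    {p q : P} (hpq : p ≠ q) {l : L} {g : G} (hp : I p l) (hq : I q l)
    (hgp : I (g • p) l) (hgq : I (g • q) l) : g = 1 := by
  have hgpq : g • p ≠ g • q := (smul_left_cancel_iff g).not.mpr hpq
  exact hfreeL g l (hpls _ _ hgpq _ _ (hinc g p l hp) (hinc g q l hq) hgp hgq)

theorem eq_one_of_mul_mem_incidenceSet
    (hpls : ∀ p q : P, p ≠ q → ∀ l m : L, I p l → I q l → I p m → I q m → l = m)
    (hinc : ∀ (g : G) (p : P) (l : L), I p l → I (g • p) (g • l))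
    (hfreeP : ∀ (g : G) (p : P), g • p = p → g = 1)
    (hfreeL : ∀ (g : G) (l : L), g • l = l → g = 1) (p : P) (l : L) :
    ∀ g : G, ∀ s ∈ incidenceSet G I p l, ∀ t ∈ incidenceSet G I p l, s ≠ t →
      g * s ∈ incidenceSet G I p l → g * t ∈ incidenceSet G I p l → g = 1 := by
  intro g s hs t ht hst hgs hgt
  have hspt : s • p ≠ t • p := fun h => hst <|
    inv_mul_eq_one.mp (hfreeP (t⁻¹ * s) p (by rw [mul_smul, h, inv_smul_smul])) |>.symm
  rw [incidenceSet, Set.mem_ofPred_eq, mul_smul] at hgs hgt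
  exact eq_one_of_smul_incident_of_incident hpls hinc hfreeL hspt hs ht hgs hgt

end PartialLinearSpace

/-- If `G` is an abelian group of automorphisms of a partial linear space acting
regularly on points and on lines, then any point-line stabilizer set is Sidon. -/
theorem stabilizer_sidon {G P L : Type*} [CommGroup G]
    (I : P → L → Prop)
    (hpls : ∀ p q : P, p ≠ q → ∀ l m : L, I p l → I q l → I p m → I q m → l = m)
    [MulAction G P] [MulAction G L]
    (hinc : ∀ (g : G) (p : P) (l : L), I p l ↔ I (g • p) (g • l))
    (hregP : ∀ p p' : P, ∃! g : G, g • p = p')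
    (hregL : ∀ l l' : L, ∃! g : G, g • l = l')
    (p : P) (l : L) :
    ∀ x ∈ {g : G | I (g • p) l}, ∀ y ∈ {g : G | I (g • p) l},
    ∀ z ∈ {g : G | I (g • p) l}, ∀ w ∈ {g : G | I (g • p) l},
      x * y = z * w → ({x, y} : Set G) = {z, w} :=
  pair_eq_pair_of_mul_eq_mul <|
    eq_one_of_mul_mem_incidenceSet hpls (fun g p l => (hinc g p l).mp)
      (fun _ _ => eq_one_of_existsUnique_smul_eq hregP)
      (fun _ _ => eq_one_of_existsUnique_smul_eq hregL) p l
end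

section
/- Let P be a finite projective plane of order q, G an abelian subgroup of Aut(P), p a point and ℓ a line with trivial stabilizers G_p = G_ℓ = 1. If d is the number of points of ℓ not in the orbit G·p, then S = {g ∈ G : p^g ∈ ℓ} is a Sidon set of size q+1−d in G, and d ≤ (q+1)·((q²+q+1)/|G| − 1). -/
/-!
Since the stabilizer of `p` is trivial, `g ↦ g • p` identifies `S` with the points of `ℓ` in the
orbit of `p`, so `|S| = q + 1 - d`. If `xy = zw` in `S` with `x ≠ w`, then `g = x z⁻¹ = w y⁻¹` maps
the points `z • p, y • p` of `ℓ` to the distinct points `x • p, w • p` of `ℓ`; the lines `ℓ` and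
`g • ℓ` then share two points, so `g • ℓ = ℓ`, `g = 1`, and `{x, y} = {z, w}`. For the bound,
every translate `g • ℓ` meets the complement of the orbit, which has `q² + q + 1 - |G|` points,
in exactly `d` points, while each point lies on at most `q + 1` of the `|G|` distinct translates;
double counting gives `|G| d ≤ (q² + q + 1 - |G|)(q + 1)`.
-/

open MulAction
open scoped Pointwise

def IsSidon {G : Type*} [Mul G] (S : Set G) : Prop :=
  ∀ x ∈ S, ∀ y ∈ S, ∀ z ∈ S, ∀ w ∈ S, x * y = z * w → ({x, y} : Set G) = {z, w}

namespace MulAction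

variable {G α : Type*} [Group G] [MulAction G α] {a : α}

theorem smul_left_injective_of_stabilizer_trivial (ha : ∀ g : G, g • a = a → g = 1) :
    Function.Injective (· • a : G → α) := fun g g' hgg' =>
  (inv_mul_eq_one.mp (ha (g'⁻¹ * g) (by simp_all [mul_smul]))).symm

theorem ncard_orbit_of_stabilizer_trivial (ha : ∀ g : G, g • a = a → g = 1) :
    (orbit G a).ncard = Nat.card G :=
  Set.ncard_range_of_injective (smul_left_injective_of_stabilizer_trivial ha)

theorem ncard_setOf_smul_mem_of_stabilizer_trivial (ha : ∀ g : G, g • a = a → g = 1)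
    (s : Set α) : {g : G | g • a ∈ s}.ncard = (s ∩ orbit G a).ncard := by
  rw [← Set.ncard_image_of_injective _ (smul_left_injective_of_stabilizer_trivial ha)]
  exact congrArg Set.ncard Set.image_preimage_eq_inter_range

end MulAction

section Incidence

variable {G P L : Type*} {I : P → L → Prop}

theorem ncard_setOf_incident_smul_le [Group G] [MulAction G L] [Finite L] {m : L}
    (hm : ∀ g : G, g • m = m → g = 1) (x : P) :
    {g : G | I x (g • m)}.ncard ≤ {m' | I x m'}.ncard :=
  Set.ncard_le_ncard_of_injOn (· • m) (fun _ hg => hg)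
    (smul_left_injective_of_stabilizer_trivial hm).injOn

def PreservesIncidence (G : Type*) [SMul G P] [SMul G L] (I : P → L → Prop) : Prop :=
  ∀ (g : G) (x : P) (m : L), I x m ↔ I (g • x) (g • m)

section Action

variable [Group G] [MulAction G P] [MulAction G L]

theorem PreservesIncidence.ncard_incident_sdiff_orbit_smul (hinc : PreservesIncidence G I)
    (a : P) (g : G) (m : L) :
    {x | I x (g • m) ∧ x ∉ orbit G a}.ncard = {x | I x m ∧ x ∉ orbit G a}.ncard := by
  have : {x | I x (g • m) ∧ x ∉ orbit G a} = g • {x | I x m ∧ x ∉ orbit G a} := by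
    have horbit (y : P) : g⁻¹ • y ∈ orbit G a ↔ y ∈ orbit G a := by
      rw [← Set.smul_mem_smul_set_iff (a := g), smul_inv_smul, smul_orbit]
    ext x
    simp only [Set.mem_smul_set_iff_inv_smul_mem, Set.mem_ofPred_eq, hinc g⁻¹ x, inv_smul_smul,
      horbit]
  rw [this, Set.ncard_smul_set]

theorem PreservesIncidence.card_mul_ncard_incident_sdiff_orbit_le [Fintype G] [Fintype P]
    [Finite L] (hinc : PreservesIncidence G I) {a : P} {m : L} (hm : ∀ g : G, g • m = m → g = 1)
    {k : ℕ} (hk : ∀ x : P, {m' | I x m'}.ncard ≤ k) :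
    Fintype.card G * {x | I x m ∧ x ∉ orbit G a}.ncard ≤ (orbit G a)ᶜ.ncard * k := by
  classical
  let t : Finset P := {x | x ∉ orbit G a}
  have hdouble := Finset.card_mul_le_card_mul (fun (g : G) x => I x (g • m))
    (s := Finset.univ) (t := t) (m := {x | I x m ∧ x ∉ orbit G a}.ncard) (n := k)
    (fun g _ => by
      rw [← hinc.ncard_incident_sdiff_orbit_smul a g, ← Set.ncard_coe_finset]
      exact (congrArg Set.ncard (by ext x; simp [Finset.bipartiteAbove, t, and_comm])).le)
    (fun x _ => by
      rw [← Set.ncard_coe_finset]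
      exact (congrArg Set.ncard (by ext g; simp [Finset.bipartiteBelow])).trans_le
        ((ncard_setOf_incident_smul_le hm x).trans (hk x)))
  rwa [Finset.card_univ, ← Set.ncard_coe_finset, show (t : Set P) = (orbit G a)ᶜ by ext; simp [t]]
    at hdouble

end Action

theorem PreservesIncidence.isSidon_setOf_smul_incident [CommGroup G] [MulAction G P]
    [MulAction G L] (hinc : PreservesIncidence G I)
    (hunique : ∀ x y : P, x ≠ y → {m : L | I x m ∧ I y m}.Subsingleton)
    {a : P} {m : L} (ha : ∀ g : G, g • a = a → g = 1) (hm : ∀ g : G, g • m = m → g = 1) :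
    IsSidon {g : G | I (g • a) m} := by
  intro x hx y hy z hz w hw hxy
  by_cases hxw : x = w
  · obtain rfl := hxw
    obtain rfl : y = z := mul_left_cancel (hxy.trans (mul_comm _ _))
    exact Set.pair_comm _ _
  have hz_x : (x * z⁻¹) • z • a = x • a := by rw [smul_smul, inv_mul_cancel_right]
  have hy_w : (x * z⁻¹) • y • a = w • a := by
    rw [smul_smul, mul_right_comm, hxy, mul_comm z w, mul_inv_cancel_right]
  have hline : I (x • a) ((x * z⁻¹) • m) ∧ I (w • a) ((x * z⁻¹) • m) :=
    ⟨hz_x ▸ (hinc _ _ _).1 hz, hy_w ▸ (hinc _ _ _).1 hy⟩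
  have hm_eq : m = (x * z⁻¹) • m := hunique (x • a) (w • a)
    (fun h => hxw (smul_left_injective_of_stabilizer_trivial ha h)) ⟨hx, hw⟩ hline
  obtain rfl : x = z := mul_inv_eq_one.mp (hm _ hm_eq.symm)
  obtain rfl : y = w := mul_left_cancel hxy
  rfl

end Incidence

theorem le_mul_div_sub_one_of_mul_le {d n N k : ℕ} (hn : 0 < n) (hnN : n ≤ N)
    (h : n * d ≤ (N - n) * k) : (d : ℚ) ≤ k * (N / n - 1) := by
  have hnq : (0 : ℚ) < n := by exact_mod_cast hn
  have h' : ((n * d : ℕ) : ℚ) ≤ ((N - n) * k : ℕ) := by exact_mod_cast h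
  push_cast [Nat.cast_sub hnN] at h'
  rw [mul_sub, mul_one, mul_div_assoc', le_sub_iff_add_le, le_div_iff₀ hnq]
  nlinarith

theorem projective_plane_sidon_general {G P L : Type*} [CommGroup G] [Fintype G]
    [Fintype P] [Fintype L] (q : ℕ)
    (I : P → L → Prop)
    -- projective plane of order q:
    (hP : Fintype.card P = q ^ 2 + q + 1)
    (hpoints : ∀ p p' : P, p ≠ p' → ∃! l : L, I p l ∧ I p' l)
    (hlinecard : ∀ l : L, {p : P | I p l}.ncard = q + 1)
    (hpointcard : ∀ p : P, {l : L | I p l}.ncard = q + 1)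
    -- G acts by collineations:
    [MulAction G P] [MulAction G L]
    (hinc : ∀ (g : G) (p : P) (l : L), I p l ↔ I (g • p) (g • l))
    (p : P) (l : L)
    (hGp : ∀ g : G, g • p = p → g = 1)
    (hGl : ∀ g : G, g • l = l → g = 1)
    (d : ℕ)
    (hd : d = {x : P | I x l ∧ x ∉ MulAction.orbit G p}.ncard) :
    (∀ x ∈ {g : G | I (g • p) l}, ∀ y ∈ {g : G | I (g • p) l},
      ∀ z ∈ {g : G | I (g • p) l}, ∀ w ∈ {g : G | I (g • p) l},
        x * y = z * w → ({x, y} : Set G) = {z, w}) ∧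
    {g : G | I (g • p) l}.ncard = q + 1 - d ∧
    (d : ℚ) ≤ (q + 1) * ((q ^ 2 + q + 1 : ℚ) / (Fintype.card G) - 1) := by
  have hinc : PreservesIncidence G I := hinc
  have hunique (x y : P) (hxy : x ≠ y) : {m : L | I x m ∧ I y m}.Subsingleton :=
    fun _ hm _ hm' => (hpoints x y hxy).unique hm hm'
  refine ⟨hinc.isSidon_setOf_smul_incident hunique hGp hGl, ?_, ?_⟩
  · have hsplit : ({x | I x l} ∩ orbit G p).ncard + d = q + 1 := by
      rw [hd, ← hlinecard l]
      exact Set.ncard_inter_add_ncard_sdiff_eq_ncard _ _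
    have hS : {g : G | I (g • p) l}.ncard = ({x | I x l} ∩ orbit G p).ncard :=
      ncard_setOf_smul_mem_of_stabilizer_trivial hGp {x | I x l}
    omega
  · have horbit : (orbit G p).ncard = Fintype.card G := by
      rw [ncard_orbit_of_stabilizer_trivial hGp, Nat.card_eq_fintype_card]
    have hcard_le : Fintype.card G ≤ q ^ 2 + q + 1 := by
      rw [← horbit, ← hP, ← Nat.card_eq_fintype_card]
      exact Set.ncard_le_card _
    have hcount := hinc.card_mul_ncard_incident_sdiff_orbit_le (a := p) hGl
      (fun x => (hpointcard x).le)
    rw [Set.ncard_compl, horbit, Nat.card_eq_fintype_card, hP, ← hd] at hcount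
    exact_mod_cast le_mul_div_sub_one_of_mul_le Fintype.card_pos hcard_le hcount

/-- Sidon sets from projective planes with an abelian collineation group:
if `G_p = G_ℓ = 1` and `d` is the number of points of `ℓ` outside the orbit of
`p`, then the point-line stabilizer is a Sidon set of size `q + 1 - d`, and
`d ≤ (q+1)((q²+q+1)/|G| - 1)`. -/
theorem projective_plane_sidon {G P L : Type*} [CommGroup G] [Fintype G]
    [Fintype P] [Fintype L] (q : ℕ)
    (I : P → L → Prop)
    -- projective plane of order q:
    (hP : Fintype.card P = q ^ 2 + q + 1)
    (hL : Fintype.card L = q ^ 2 + q + 1)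
    (hpoints : ∀ p p' : P, p ≠ p' → ∃! l : L, I p l ∧ I p' l)
    (hlines : ∀ l l' : L, l ≠ l' → ∃! p : P, I p l ∧ I p l')
    (hlinecard : ∀ l : L, {p : P | I p l}.ncard = q + 1)
    (hpointcard : ∀ p : P, {l : L | I p l}.ncard = q + 1)
    -- G acts by collineations:
    [MulAction G P] [MulAction G L]
    (hinc : ∀ (g : G) (p : P) (l : L), I p l ↔ I (g • p) (g • l))
    (p : P) (l : L)
    (hGp : ∀ g : G, g • p = p → g = 1)
    (hGl : ∀ g : G, g • l = l → g = 1)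
    (d : ℕ)
    (hd : d = {x : P | I x l ∧ x ∉ MulAction.orbit G p}.ncard) :
    (∀ x ∈ {g : G | I (g • p) l}, ∀ y ∈ {g : G | I (g • p) l},
      ∀ z ∈ {g : G | I (g • p) l}, ∀ w ∈ {g : G | I (g • p) l},
        x * y = z * w → ({x, y} : Set G) = {z, w}) ∧
    {g : G | I (g • p) l}.ncard = q + 1 - d ∧
    (d : ℚ) ≤ (q + 1) * ((q ^ 2 + q + 1 : ℚ) / (Fintype.card G) - 1) :=
  projective_plane_sidon_general q I hP hpoints hlinecard hpointcard hinc p l hGp hGl d hd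
end

section
/- Let K = F_{3^d} with d odd, and let φ(x) = x^{10} + x^6 − x^2 (or x^{10} − x^6 − x^2). Then φ is a planar function on K, i.e., for each h ≠ 0 the map x ↦ φ(x+h) − φ(x) is a bijection. -/
/-!
In characteristic 3 the exponents `10 = 9 + 1`, `6 = 3 + 3`, `2 = 1 + 1` are sums of two powers
of 3, so `φ (x + y) = φ x + φ y + β x y` with `β` additive in each variable. Hence
`x ↦ φ (x + h) - φ x` is a translate of the additive map `β · h`, and it is injective as soon as
`β x h ≠ 0` for `x, h ≠ 0`. Using `ε ^ 2 = 1`, `β x y = x y ((x⁴ + y⁴)² + (x²y² + ε)²)`. As `-1` is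
not a square in `𝔽_{3^d}` for odd `d`, the sum of squares can only vanish if `x⁴ = -y⁴` and
`x²y² = -ε`, and then `(y⁴)² = -ε² = -1`, a contradiction.
-/

open Function

section

variable {K : Type*} [Field K]

theorem sq_add_sq_eq_zero_iff (hK : ¬IsSquare (-1 : K)) {a b : K} :
    a ^ 2 + b ^ 2 = 0 ↔ a = 0 ∧ b = 0 := by
  refine ⟨fun hab => ?_, fun ⟨ha, hb⟩ => by simp [ha, hb]⟩
  have hb : b = 0 := by
    by_contra hb
    exact hK ⟨a / b, by field_simp; linear_combination -hab⟩
  subst hb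
  simpa using hab

def IsPlanar (f : K → K) : Prop :=
  ∀ h : K, h ≠ 0 → Bijective fun x => f (x + h) - f x

def coulterMatthews (ε x : K) : K :=
  x ^ 10 + ε * x ^ 6 - x ^ 2

def coulterMatthewsPolar (ε x y : K) : K :=
  x ^ 9 * y + x * y ^ 9 - ε * x ^ 3 * y ^ 3 + x * y

variable [CharP K 3] (ε : K)

theorem coulterMatthews_add (x y : K) :
    coulterMatthews ε (x + y) =
      coulterMatthews ε x + coulterMatthews ε y + coulterMatthewsPolar ε x y := by
  have h3 : (3 : K) = 0 := CharP.cast_eq_zero K 3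
  have h9 : (x + y) ^ 9 = x ^ 9 + y ^ 9 := add_pow_char_pow (p := 3) (n := 2) x y
  have h6 : (x + y) ^ 6 = (x ^ 3 + y ^ 3) ^ 2 := by rw [← add_pow_char, ← pow_mul]
  unfold coulterMatthews coulterMatthewsPolar
  linear_combination (x + y) * h9 + ε * h6 + (ε * x ^ 3 * y ^ 3 - x * y) * h3

theorem coulterMatthewsPolar_add_left (x x' y : K) :
    coulterMatthewsPolar ε (x + x') y =
      coulterMatthewsPolar ε x y + coulterMatthewsPolar ε x' y := by
  have h9 : (x + x') ^ 9 = x ^ 9 + x' ^ 9 := add_pow_char_pow (p := 3) (n := 2) x x'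
  have h3 : (x + x') ^ 3 = x ^ 3 + x' ^ 3 := add_pow_char (p := 3) x x'
  unfold coulterMatthewsPolar
  linear_combination y * h9 - ε * y ^ 3 * h3

theorem coulterMatthewsPolar_eq_mul_sq_add_sq (hε : ε ^ 2 = 1) (x y : K) :
    coulterMatthewsPolar ε x y =
      x * y * ((x ^ 4 + y ^ 4) ^ 2 + (x ^ 2 * y ^ 2 + ε) ^ 2) := by
  have h3 : (3 : K) = 0 := CharP.cast_eq_zero K 3
  unfold coulterMatthewsPolar
  linear_combination (-(x ^ 5 * y ^ 5) - ε * x ^ 3 * y ^ 3) * h3 - x * y * hε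

theorem coulterMatthewsPolar_eq_zero_iff (hK : ¬IsSquare (-1 : K)) (hε : ε ^ 2 = 1)
    {x y : K} : coulterMatthewsPolar ε x y = 0 ↔ x = 0 ∨ y = 0 := by
  refine ⟨fun hxy => ?_, by rintro (rfl | rfl) <;> simp [coulterMatthewsPolar]⟩
  rw [coulterMatthewsPolar_eq_mul_sq_add_sq ε hε, mul_eq_zero, mul_eq_zero] at hxy
  refine hxy.resolve_right fun hsq => hK ⟨y ^ 4, ?_⟩
  obtain ⟨ha, hb⟩ := (sq_add_sq_eq_zero_iff hK).mp hsq
  linear_combination (x ^ 2 * y ^ 2 - ε) * hb - y ^ 4 * ha + hε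

theorem isPlanar_coulterMatthews [Finite K] (hK : ¬IsSquare (-1 : K)) (hε : ε ^ 2 = 1) :
    IsPlanar (coulterMatthews ε) := by
  intro h hh
  let polar : K →+ K :=
    AddMonoidHom.mk' (coulterMatthewsPolar ε · h) (coulterMatthewsPolar_add_left ε · · h)
  have polar_injective : Injective polar := (injective_iff_map_eq_zero polar).mpr fun x hx =>
    ((coulterMatthewsPolar_eq_zero_iff ε hK hε).mp hx).resolve_right hh
  have difference_eq : (fun x => coulterMatthews ε (x + h) - coulterMatthews ε x) =
      fun x => polar x + coulterMatthews ε h := by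
    funext x
    rw [coulterMatthews_add]
    simp only [polar, AddMonoidHom.mk'_apply]
    ring
  rw [difference_eq, ← Finite.injective_iff_bijective]
  exact (add_left_injective _).comp polar_injective

end

theorem three_pow_mod_four_of_odd {d : ℕ} (hd : Odd d) : 3 ^ d % 4 = 3 := by
  obtain ⟨k, rfl⟩ := hd
  rw [pow_succ, pow_mul, Nat.mul_mod, Nat.pow_mod]
  norm_num

/-- Coulter–Matthews style example: over `F_{3^d}` with `d` odd,
`φ(x) = x^10 ± x^6 - x^2` is a planar function. -/
theorem coulter_matthews_planar {K : Type*} [Field K] [Fintype K]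
    (d : ℕ) (hd : Odd d) (hcard : Fintype.card K = 3 ^ d)
    (ε : K) (hε : ε = 1 ∨ ε = -1) :
    ∀ h : K, h ≠ 0 →
      Function.Bijective (fun x : K =>
        ((x + h) ^ 10 + ε * (x + h) ^ 6 - (x + h) ^ 2) - (x ^ 10 + ε * x ^ 6 - x ^ 2)) := by
  have : CharP K 3 := charP_of_card_eq_prime_pow hcard
  have hK : ¬IsSquare (-1 : K) := by
    rw [FiniteField.isSquare_neg_one_iff, hcard, three_pow_mod_four_of_odd hd]
    decide
  have hε2 : ε ^ 2 = 1 := by rcases hε with rfl | rfl <;> norm_num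
  exact isPlanar_coulterMatthews ε hK hε2
end

section
/- Let K be a field and A a commutative K-subalgebra of the matrix algebra M₃(K). Then dim_K A ≤ 3. -/
/-!
For `v ∈ V`, evaluation `a ↦ a v` maps `A` onto `A v` with kernel `Ann(v)`, and by
commutativity `Ann(v)` kills all of `A v`. If `A v = V` evaluation is injective, so
`dim A ≤ 3`. If `dim A v ≤ 1` for every `v`, every vector is an eigenvector of every
element of `A`, so `A = K`. In the remaining case `A v` is a hyperplane `ker f`, every
`a ∈ Ann(v)` has the rank-one form `y ↦ f y • a x₀` (with `f x₀ = 1`), and commutativity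
of two such maps forces either `dim Ann(v) ≤ 1` or `Ann(v) x₀ = A v`; in the latter case
every `b ∈ A` acts on `A v` as a scalar, contradicting `dim A v = 2`.
-/

open Module LinearMap

namespace Subalgebra

variable {K V : Type*} [Field K] [AddCommGroup V] [Module K V]

theorem _root_.Submodule.exists_ker_eq_of_finrank_add_one [FiniteDimensional K V]
    {W : Submodule K V} (hW : finrank K W + 1 = finrank K V) :
    ∃ f : V →ₗ[K] K, ker f = W ∧ ∃ x, f x = 1 := by
  have hquot : finrank K (V ⧸ W) = finrank K K := by
    have := W.finrank_quotient_add_finrank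
    rw [finrank_self]
    omega
  let e := LinearEquiv.ofFinrankEq (V ⧸ W) K hquot
  refine ⟨e.toLinearMap ∘ₗ W.mkQ, by rw [LinearEquiv.ker_comp, Submodule.ker_mkQ], ?_⟩
  exact (e.surjective.comp W.mkQ_surjective) 1

variable (A : Subalgebra K (Module.End K V))

def orbitMap (v : V) : A →ₗ[K] V :=
  LinearMap.applyₗ v ∘ₗ A.val.toLinearMap

@[simp]
theorem orbitMap_apply (v : V) (a : A) : A.orbitMap v a = a.1 v := rfl

variable {A}

theorem apply_apply_comm (hA : ∀ a ∈ A, ∀ b ∈ A, a * b = b * a) (a b : A) (x : V) :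
    a.1 (b.1 x) = b.1 (a.1 x) := by
  rw [← Module.End.mul_apply, hA a a.2 b b.2, Module.End.mul_apply]

theorem apply_eq_zero_of_mem_ker_orbitMap (hA : ∀ a ∈ A, ∀ b ∈ A, a * b = b * a) {v : V}
    {a : A} (ha : a ∈ ker (A.orbitMap v)) {y : V} (hy : y ∈ range (A.orbitMap v)) :
    a.1 y = 0 := by
  obtain ⟨b, rfl⟩ := hy
  rw [mem_ker, orbitMap_apply] at ha
  rw [orbitMap_apply, apply_apply_comm hA, ha, map_zero]

theorem orbitMap_injective (hA : ∀ a ∈ A, ∀ b ∈ A, a * b = b * a) {v : V}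
    (hv : range (A.orbitMap v) = ⊤) : Function.Injective (A.orbitMap v) := by
  refine (injective_iff_map_eq_zero _).2 fun a ha => Subtype.ext <| LinearMap.ext fun y => ?_
  exact apply_eq_zero_of_mem_ker_orbitMap hA ha (hv ▸ Submodule.mem_top)

theorem le_bot_of_finrank_range_orbitMap_lt_two [FiniteDimensional K V]
    (h : ∀ v, finrank K (range (A.orbitMap v)) < 2) : A ≤ ⊥ := by
  intro a ha
  obtain ⟨c, hc⟩ := exists_eq_smul_id_of_forall_notLinearIndependent (f := a) fun v hind => by
    have hle : Submodule.span K (Set.range ![v, a v]) ≤ range (A.orbitMap v) := by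
      rw [Submodule.span_le, Set.range_subset_iff, Fin.forall_fin_two]
      exact ⟨⟨1, rfl⟩, ⟨⟨a, ha⟩, rfl⟩⟩
    have := Submodule.finrank_mono hle
    rw [finrank_span_eq_card hind, Fintype.card_fin] at this
    exact (h v).not_ge this
  exact Algebra.mem_bot.2 ⟨c, by rw [hc, Algebra.algebraMap_eq_smul_one]⟩

section Hyperplane

variable {v x₀ : V} {f : V →ₗ[K] K}

theorem apply_eq_smul_of_mem_ker_orbitMap (hA : ∀ a ∈ A, ∀ b ∈ A, a * b = b * a)
    (hf : ker f = range (A.orbitMap v)) (hx₀ : f x₀ = 1) {a : A}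
    (ha : a ∈ ker (A.orbitMap v)) (y : V) : a.1 y = f y • a.1 x₀ := by
  have hy : y - f y • x₀ ∈ range (A.orbitMap v) := by
    rw [← hf, mem_ker]
    simp [hx₀]
  have := apply_eq_zero_of_mem_ker_orbitMap hA ha hy
  rwa [map_sub, map_smul, sub_eq_zero] at this

theorem ker_orbitMap_le_span_singleton (hA : ∀ a ∈ A, ∀ b ∈ A, a * b = b * a)
    (hf : ker f = range (A.orbitMap v)) (hx₀ : f x₀ = 1) {a : A}
    (ha : a ∈ ker (A.orbitMap v)) (hfa : f (a.1 x₀) ≠ 0) :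
    ker (A.orbitMap v) ≤ K ∙ a := by
  intro a' ha'
  have rank_one : ∀ {b : A}, b ∈ ker (A.orbitMap v) → ∀ y, b.1 y = f y • b.1 x₀ :=
    apply_eq_smul_of_mem_ker_orbitMap hA hf hx₀
  have hswap : f (a'.1 x₀) • a.1 x₀ = f (a.1 x₀) • a'.1 x₀ := by
    rw [← rank_one ha, ← rank_one ha', apply_apply_comm hA]
  refine Submodule.mem_span_singleton.2
    ⟨f (a'.1 x₀) / f (a.1 x₀), Subtype.ext <| LinearMap.ext fun y => ?_⟩
  rw [Subalgebra.coe_smul, LinearMap.smul_apply, rank_one ha y, rank_one ha' y, smul_comm,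
    div_eq_inv_mul, mul_smul, hswap, smul_smul, smul_smul, mul_assoc, inv_mul_cancel₀ hfa,
    mul_one]

end Hyperplane

theorem finrank_ker_orbitMap_le_one [FiniteDimensional K V] (hV : finrank K V = 3)
    (hA : ∀ a ∈ A, ∀ b ∈ A, a * b = b * a) {v : V}
    (hv : finrank K (range (A.orbitMap v)) = 2) : finrank K (ker (A.orbitMap v)) ≤ 1 := by
  set W := range (A.orbitMap v)
  set I := ker (A.orbitMap v)
  obtain ⟨f, hf, x₀, hx₀⟩ := W.exists_ker_eq_of_finrank_add_one (by omega)
  have rank_one : ∀ {a : A}, a ∈ I → ∀ y, a.1 y = f y • a.1 x₀ :=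
    apply_eq_smul_of_mem_ker_orbitMap hA hf hx₀
  by_contra! hI
  have hfI : ∀ a ∈ I, f (a.1 x₀) = 0 := by
    intro a ha
    by_contra hfa
    have : finrank K I ≤ 1 := (Submodule.finrank_mono
      (ker_orbitMap_le_span_singleton hA hf hx₀ ha hfa)).trans (finrank_span_le_card {a})
    omega
  set φ := (A.orbitMap x₀).domRestrict I
  have hφ : Function.Injective φ := by
    rw [injective_iff_map_eq_zero]
    intro a ha
    ext y
    rw [rank_one a.2, show a.1.1 x₀ = 0 from ha, smul_zero]
    rfl
  have hφW : range φ = W := by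
    refine Submodule.eq_of_le_of_finrank_le ?_ (by rw [finrank_range_of_inj hφ]; omega)
    rintro _ ⟨a, rfl⟩
    rw [← hf]
    exact hfI a.1 a.2
  obtain ⟨a, hav⟩ : v ∈ range φ := hφW ▸ ⟨1, rfl⟩
  have hWv : W ≤ K ∙ v := by
    rintro _ ⟨b, rfl⟩
    refine Submodule.mem_span_singleton.2 ⟨f (b.1 x₀), ?_⟩
    rw [orbitMap_apply, ← hav]
    exact ((apply_apply_comm hA b a.1 x₀).trans (rank_one a.2 _)).symm
  have : finrank K W ≤ 1 := (Submodule.finrank_mono hWv).trans (finrank_span_le_card {v})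
  omega

theorem finrank_le_three_of_commute [FiniteDimensional K V] (hV : finrank K V = 3)
    (hA : ∀ a ∈ A, ∀ b ∈ A, a * b = b * a) : finrank K A ≤ 3 := by
  by_cases h : ∃ v, 2 ≤ finrank K (range (A.orbitMap v))
  · obtain ⟨v, hv⟩ := h
    have hsum := (A.orbitMap v).finrank_range_add_finrank_ker
    have hle := hV ▸ Submodule.finrank_le (range (A.orbitMap v))
    obtain h2 | h3 : finrank K (range (A.orbitMap v)) = 2 ∨
        finrank K (range (A.orbitMap v)) = 3 := by omega
    · have := finrank_ker_orbitMap_le_one hV hA h2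
      omega
    · exact hV ▸ finrank_le_finrank_of_injective
        (orbitMap_injective hA (Submodule.eq_top_of_finrank_eq (h3.trans hV.symm)))
  · simp only [not_exists, not_le] at h
    have : Nontrivial V := Module.nontrivial_of_finrank_eq_succ hV
    calc finrank K A ≤ finrank K (⊥ : Subalgebra K (Module.End K V)) := by
          rw [← Subalgebra.finrank_toSubmodule, ← Subalgebra.finrank_toSubmodule]
          exact Submodule.finrank_mono (le_bot_of_finrank_range_orbitMap_lt_two h)
      _ ≤ 3 := by rw [Subalgebra.finrank_bot]; omega

end Subalgebra

/-- Schur's theorem in dimension 3: a commutative subalgebra of `M₃(K)` has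
dimension at most 3. -/
theorem commutative_subalgebra_dim_le {K : Type*} [Field K]
    (A : Subalgebra K (Matrix (Fin 3) (Fin 3) K))
    (hcomm : ∀ a ∈ A, ∀ b ∈ A, a * b = b * a) :
    Module.finrank K A ≤ 3 := by
  let e : Module.End K (Fin 3 → K) ≃ₐ[K] Matrix (Fin 3) (Fin 3) K := algEquivMatrix'
  have hcomm' : ∀ a ∈ A.map e.symm.toAlgHom, ∀ b ∈ A.map e.symm.toAlgHom,
      a * b = b * a := by
    rintro _ ⟨a, ha, rfl⟩ _ ⟨b, hb, rfl⟩
    simp only [← map_mul, hcomm a ha b hb]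
  rw [(e.symm.subalgebraMap A).toLinearEquiv.finrank_eq]
  exact Subalgebra.finrank_le_three_of_commute (by simp) hcomm'
end
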